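/- Let d = 1, m = 2, Q ≡ 1, and replace the symmetric potential by the antisymmetric matrix V(x) = [[0, −x], [x, 0]] for x ∈ ℝ (so that ⟨V(x)ξ, ξ⟩ = 0 for all ξ ∈ ℝ²). Then the continuity property of the form fails: there exists no constant C > 0 such that |a(f,g)| ≤ C ‖f‖_a ‖g‖_a for all f, g ∈ D(a), where a(f,g) = ∫_ℝ Σ_{j=1}^2 f_j'(x) g_j'(x) dx + ∫_ℝ ⟨V(x)f(x), g(x)⟩ dx on D(a) = H¹(ℝ, ℝ²) and ‖f‖²_a = ‖f‖²_{H¹} + ∫_ℝ ⟨V(x)f(x), f(x)⟩ dx = ‖f‖²_{H¹}. -/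

import Mathlib

open MeasureTheory Filter Topology ENNReal

noncomputable section

open Real

/-- `G` is the weak derivative of `g` on `ℝ` (integration by parts against
smooth compactly supported functions). -/
def HasWeakDeriv (g G : ℝ → ℝ) : Prop :=
  ∀ φ : ℝ → ℝ, ContDiff ℝ (⊤ : ℕ∞) φ → HasCompactSupport φ →
    ∫ x, g x * deriv φ x ∂volume = - ∫ x, G x * φ x ∂volume

/-- Membership in `H¹(ℝ)` with weak derivative `G`. -/
def MemH1R1 (g G : ℝ → ℝ) : Prop :=
  MemLp g 2 volume ∧ MemLp G 2 volume ∧ HasWeakDeriv g G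

lemma weakDeriv_of_contDiff (h : ℝ → ℝ) (hh : ContDiff ℝ 1 h) :
    HasWeakDeriv h (deriv h) := by
  intro φ hφ hφc
  have hφ1 : ContDiff ℝ 1 φ := hφ.of_le (by simp)
  have hF : ContDiff ℝ 1 (fun x => h x * φ x) := hh.mul hφ1
  have hFc : HasCompactSupport (fun x => h x * φ x) :=
    HasCompactSupport.mul_left hφc
  have hderiv : ∀ x, deriv (fun x => h x * φ x) x
      = deriv h x * φ x + h x * deriv φ x := fun x =>
    deriv_fun_mul (hh.differentiable one_ne_zero x) (hφ1.differentiable one_ne_zero x)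
  have hint1 : Integrable (fun x => deriv h x * φ x) volume :=
    Continuous.integrable_of_hasCompactSupport
      ((hh.continuous_deriv le_rfl).mul hφ.continuous) (HasCompactSupport.mul_left hφc)
  have hint2 : Integrable (fun x => h x * deriv φ x) volume :=
    Continuous.integrable_of_hasCompactSupport
      (hh.continuous.mul (hφ.continuous_deriv (by simp))) (HasCompactSupport.mul_left hφc.deriv)
  have hintF : Integrable (fun x => deriv (fun x => h x * φ x) x) volume :=
    Continuous.integrable_of_hasCompactSupport (hF.continuous_deriv le_rfl) hFc.deriv
  have h0 : ∫ x, deriv (fun x => h x * φ x) x = 0 := by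
    rw [← intervalIntegral.integral_Iic_add_Ioi (b := (0:ℝ))
      hintF.integrableOn hintF.integrableOn,
      hFc.integral_Iic_deriv_eq hF 0, hFc.integral_Ioi_deriv_eq hF 0]
    ring
  have h1 : ∫ x, (deriv h x * φ x + h x * deriv φ x) = 0 := by
    rw [← h0]; congr 1; ext x; rw [hderiv x]
  rw [integral_add hint1 hint2] at h1
  linarith

/-- For `d = 1`, `m = 2`, `Q ≡ 1` and the antisymmetric potential
`V(x) = [[0, -x], [x, 0]]` (so `⟨V(x)ξ, ξ⟩ = 0`, `D(a) = H¹(ℝ, ℝ²)` and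
`‖f‖_a = ‖f‖_{H¹}`), the continuity property of the form
`a(f,g) = ∫ (f₁' g₁' + f₂' g₂') + ∫ (-x f₂ g₁ + x f₁ g₂)` fails:
there is no constant `C > 0` with `|a(f,g)| ≤ C ‖f‖_a ‖g‖_a` on `D(a)`. -/
theorem no_continuity_antisymmetric_potential :
    ¬ ∃ C : ℝ, 0 < C ∧
      ∀ f₁ f₂ g₁ g₂ Df₁ Df₂ Dg₁ Dg₂ : ℝ → ℝ,
        MemH1R1 f₁ Df₁ → MemH1R1 f₂ Df₂ → MemH1R1 g₁ Dg₁ → MemH1R1 g₂ Dg₂ →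
        Integrable (fun x => -x * f₂ x * g₁ x + x * f₁ x * g₂ x) volume →
        |(∫ x, (Df₁ x * Dg₁ x + Df₂ x * Dg₂ x) ∂volume)
            + ∫ x, (-x * f₂ x * g₁ x + x * f₁ x * g₂ x) ∂volume|
          ≤ C * Real.sqrt ((∫ x, (f₁ x ^ 2 + f₂ x ^ 2) ∂volume)
                + ∫ x, (Df₁ x ^ 2 + Df₂ x ^ 2) ∂volume)
              * Real.sqrt ((∫ x, (g₁ x ^ 2 + g₂ x ^ 2) ∂volume)
                + ∫ x, (Dg₁ x ^ 2 + Dg₂ x ^ 2) ∂volume) := by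
  rintro ⟨C, hC, H⟩
  -- basic integrable facts
  have hexp : Integrable (fun y : ℝ => Real.exp (-2 * y^2)) volume :=
    integrable_exp_neg_mul_sq two_pos
  have hy2exp : Integrable (fun y : ℝ => y^2 * Real.exp (-2 * y^2)) volume := by
    have := integrable_rpow_mul_exp_neg_mul_sq (b := 2) two_pos (s := 2) (by norm_num)
    refine this.congr (Eventually.of_forall fun y => ?_)
    show y ^ (2:ℝ) * rexp (-2 * y^2) = y^2 * rexp (-2*y^2)
    norm_num [show (2:ℝ) = ((2:ℕ):ℝ) by norm_num, Real.rpow_natCast]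
  have hyexp : Integrable (fun y : ℝ => y * Real.exp (-2 * y^2)) volume := by
    have := integrable_rpow_mul_exp_neg_mul_sq (b := 2) two_pos (s := 1) (by norm_num)
    refine this.congr (Eventually.of_forall fun y => ?_)
    show y ^ (1:ℝ) * rexp (-2 * y^2) = y * rexp (-2*y^2)
    rw [Real.rpow_one]
  -- constants
  set I : ℝ := ∫ x : ℝ, rexp (-2 * x^2) with hIdef
  have hIpos : 0 < I := by
    rw [hIdef, integral_gaussian 2]
    exact Real.sqrt_pos.2 (by positivity)
  set J : ℝ := ∫ y : ℝ, y * rexp (-2 * y^2) with hJdef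
  set B : ℝ := ∫ x : ℝ, (rexp (-x^2) * (-(2*x)))^2 with hBdef
  set K : ℝ := C * Real.sqrt (I + B) * Real.sqrt (I + B) with hKdef
  set t : ℝ := (K + |J| + 1) / I with htdef
  have htI : t * I = K + |J| + 1 := by
    rw [htdef]; field_simp
  -- the witness functions
  set g : ℝ → ℝ := fun x => rexp (-(x - t)^2) with hgdef
  set D : ℝ → ℝ := fun x => rexp (-(x - t)^2) * (-(2 * (x - t))) with hDdef
  have hgsq : ∀ x, g x * g x = rexp (-2 * (x - t)^2) := by
    intro x
    rw [hgdef, ← Real.exp_add]; ring_nf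
  have hgc : ContDiff ℝ 1 g := (((contDiff_id.sub contDiff_const).pow 2).neg).exp
  have hderivg : deriv g = D := by
    funext x
    have h1 : HasDerivAt (fun x : ℝ => -(x - t)^2) (-(2 * (x - t))) x := by
      have := (((hasDerivAt_id x).sub_const t).fun_pow 2).fun_neg
      simpa using this
    exact (h1.exp).deriv
  -- Memℒp facts
  have hg2int : Integrable (fun x => g x ^ 2) volume := by
    refine (hexp.comp_sub_right t).congr (Eventually.of_forall fun x => ?_)
    show rexp (-2 * (x - t)^2) = g x ^ 2
    rw [sq (g x), hgsq]
  have hD2int : Integrable (fun x => D x ^ 2) volume := by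
    have h4 : Integrable (fun y : ℝ => (rexp (-y^2) * (-(2*y)))^2) volume := by
      refine ((hy2exp.const_mul 4)).congr (Eventually.of_forall fun y => ?_)
      show 4 * (y^2 * rexp (-2*y^2)) = (rexp (-y^2) * (-(2*y)))^2
      rw [mul_pow, sq (rexp (-y^2)), ← Real.exp_add]; ring_nf
    refine (h4.comp_sub_right t).congr (Eventually.of_forall fun x => ?_)
    rfl
  have hgmem : MemLp g 2 volume :=
    (memLp_two_iff_integrable_sq hgc.continuous.aestronglyMeasurable).2 hg2int
  have hDc : Continuous D :=
    (Real.continuous_exp.comp (((continuous_id.sub continuous_const).pow 2).neg)).mul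
      ((continuous_const.mul (continuous_id.sub continuous_const)).neg)
  have hDmem : MemLp D 2 volume :=
    (memLp_two_iff_integrable_sq hDc.aestronglyMeasurable).2 hD2int
  have hgH1 : MemH1R1 g D := by
    refine ⟨hgmem, hDmem, ?_⟩
    have := weakDeriv_of_contDiff g hgc
    rwa [hderivg] at this
  have h0H1 : MemH1R1 (fun _ => (0:ℝ)) (fun _ => (0:ℝ)) := by
    refine ⟨MemLp.zero', MemLp.zero', ?_⟩
    intro φ _ _
    simp
  -- bilinear integrand
  have hbil : Integrable (fun x => -x * (fun _ => (0:ℝ)) x * (fun _ => (0:ℝ)) x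
      + x * g x * g x) volume := by
    have hint : Integrable (fun y : ℝ => (y + t) * rexp (-2 * y^2)) volume := by
      refine (hyexp.add (hexp.const_mul t)).congr (Eventually.of_forall fun y => ?_)
      show y * rexp (-2*y^2) + t * rexp (-2*y^2) = (y + t) * rexp (-2*y^2)
      ring
    refine (hint.comp_sub_right t).congr (Eventually.of_forall fun x => ?_)
    show (x - t + t) * rexp (-2 * (x - t)^2) = -x * 0 * 0 + x * g x * g x
    rw [mul_assoc x, hgsq]; ring
  -- the main integral value
  have hval : ∫ x, x * g x * g x = J + t * I := by
    have e1 : ∀ x : ℝ, x * g x * g x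
        = (fun y => (y + t) * rexp (-2 * y^2)) (x - t) := by
      intro x
      show x * g x * g x = (x - t + t) * rexp (-2 * (x - t)^2)
      rw [mul_assoc x, hgsq]; ring
    rw [integral_congr_ae (Eventually.of_forall e1),
      integral_sub_right_eq_self (fun y => (y + t) * rexp (-2 * y^2)) t]
    have e2 : ∀ y : ℝ, (y + t) * rexp (-2 * y^2)
        = y * rexp (-2*y^2) + t * rexp (-2*y^2) := fun y => by ring
    rw [integral_congr_ae (Eventually.of_forall e2),
      integral_add hyexp (hexp.const_mul t), integral_const_mul t (fun y : ℝ => rexp (-2 * y^2))]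
  -- integrals on the RHS
  have hgsqint : ∫ x, g x ^ 2 = I := by
    have : ∀ x : ℝ, g x ^ 2 = (fun y => rexp (-2 * y^2)) (x - t) := by
      intro x; show g x ^ 2 = rexp (-2 * (x-t)^2); rw [sq (g x), hgsq]
    rw [integral_congr_ae (Eventually.of_forall this),
      integral_sub_right_eq_self (fun y => rexp (-2 * y^2)) t]
  have hDsqint : ∫ x, D x ^ 2 = B := by
    rw [hBdef, ← integral_sub_right_eq_self (fun y => (rexp (-y^2) * (-(2*y)))^2) t]
  -- apply the hypothesis
  have := H g (fun _ => 0) (fun _ => 0) g D (fun _ => 0) (fun _ => 0) D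
    hgH1 h0H1 h0H1 hgH1 hbil
  simp only [mul_zero, zero_mul, add_zero, zero_add, integral_zero,
    ne_eq, zero_pow, OfNat.ofNat_ne_zero, not_false_eq_true] at this
  rw [hval, hgsqint, hDsqint] at this
  rw [← hKdef] at this
  linarith [le_abs_self (J + t * I), neg_abs_le J, htI, this]
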